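/- Let N be a finite set of divisions with an assignment partition ((N_k, X_k))_{k=1}^K, let ρ be any function mapping each preference profile to a linear order on N, and let f be the mechanism that, for each profile ≻, runs serial dictatorship within each group k using the restriction of ρ(≻) to N_k. Fix a division i with group k = g(i), and two profiles ≻ and ≻'; write ▷* = ρ(≻) and ▷' = ρ(≻'), and ▷*_k, ▷'_k for their restrictions to N_k. If (i) pre(i, ▷*_k) ⊆ pre(i, ▷'_k), (ii) ▷*_k and ▷'_k agree on pre(i, ▷*_k), and (iii) for every j ∈ pre(i, ▷*_k) the orders ≻_j and ≻'_j agree on X_k, then f_i(≻) ⪰_i f_i(≻'), where ⪰_i is the weak order induced by ≻_i. -/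

import Mathlib

open scoped Classical

/-- Each division has a strict linear (total) preference order over workers. -/
def StrictProfile {α : Type*} (pref : α → α → α → Prop) : Prop :=
  ∀ i, IsStrictTotalOrder α (pref i)

/-- `pref'` is an improvement for division `i` with respect to `pref`. -/
def Improvement {α : Type*} (pref pref' : α → α → α → Prop) (i : α) : Prop :=
  pref' i = pref i ∧
  (∀ j, j ≠ i → ∀ k, k ≠ i → pref j i k → pref' j i k) ∧
  (∀ j, j ≠ i → ∀ k, k ≠ i → ∀ l, l ≠ i → (pref j k l ↔ pref' j k l))

/-- The `r`-maximum element of the finite set `s` (chosen via Hilbert choice):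
the element of `s` that `r`-beats every other element of `s`. -/
noncomputable def pick {α : Type*} [Nonempty α] (r : α → α → Prop) (s : Finset α) : α :=
  Classical.epsilon fun m => m ∈ s ∧ ∀ x ∈ s, x ≠ m → r m x

/-- `((Npart k, Xpart k))_k` is an assignment partition: `Npart` partitions the
divisions, `Xpart` partitions the workers (both identified with `α`), and for each
group `k` we have separation (`Npart k ∩ Xpart k = ∅`) and balance
(`|Npart k| = |Xpart k|`). -/
def IsAPartition {α : Type*} {K : ℕ} (Npart Xpart : Fin K → Finset α) : Prop :=
  (∀ a : α, ∃! k, a ∈ Npart k) ∧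
  (∀ a : α, ∃! k, a ∈ Xpart k) ∧
  (∀ k, ∀ a ∈ Npart k, a ∉ Xpart k) ∧
  (∀ k, (Npart k).card = (Xpart k).card)

/-- The choice set `X_{g(i)}` of division `i`: the worker set of `i`'s group. -/
noncomputable def choiceSet {α : Type*} [DecidableEq α] {K : ℕ}
    (Npart Xpart : Fin K → Finset α) (i : α) : Finset α :=
  Finset.univ.biUnion fun k => if i ∈ Npart k then Xpart k else ∅

/-- An assignment is feasible under the assignment partition if `μ(N_k) = X_k` for all `k`. -/
def FeasibleAP {α : Type*} [DecidableEq α] {K : ℕ}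
    (Npart Xpart : Fin K → Finset α) (μ : α → α) : Prop :=
  ∀ k, (Npart k).image μ = Xpart k

/-- Efficiency under the assignment partition: `μ` is feasible and no feasible
assignment `μ'` weakly improves every division and strictly improves some division. -/
def EfficientAP {α : Type*} [DecidableEq α] {K : ℕ}
    (Npart Xpart : Fin K → Finset α) (pref : α → α → α → Prop) (μ : α → α) : Prop :=
  FeasibleAP Npart Xpart μ ∧
  ¬ ∃ μ' : α → α, Function.Bijective μ' ∧ FeasibleAP Npart Xpart μ' ∧
      (∀ i, μ' i = μ i ∨ pref i (μ' i) (μ i)) ∧ (∃ j, pref j (μ' j) (μ j))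

/-- The list of the elements of `s` in decreasing `r`-priority order. -/
noncomputable def orderList {α : Type*} [DecidableEq α] [Nonempty α]
    (r : α → α → Prop) : ℕ → Finset α → List α
  | 0, _ => []
  | fuel + 1, s =>
    if s.Nonempty then pick r s :: orderList r fuel (s.erase (pick r s)) else []

/-- Serial dictatorship: the divisions in the list, in order, each take their most
preferred remaining worker from the pool `X`. -/
noncomputable def sdAssign {α : Type*} [DecidableEq α] [Nonempty α]
    (pref : α → α → α → Prop) : List α → Finset α → (α → α)
  | [], _ => fun a => a
  | i :: rest, X =>
    Function.update (sdAssign pref rest (X.erase (pick (pref i) X))) i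
      (pick (pref i) X)

/-- The Endogenous-Order Serial Dictatorship form: given a linear order `r` on the
divisions, run serial dictatorship within each group `k`, processing the divisions
of `N_k` in the order given by the restriction of `r` to `N_k`, over the worker
pool `X_k`. -/
noncomputable def groupSD {α : Type*} [Fintype α] [DecidableEq α] [Nonempty α] {K : ℕ}
    (Npart Xpart : Fin K → Finset α) (r : α → α → Prop)
    (pref : α → α → α → Prop) : α → α :=
  fun i =>
    if h : ∃ k, i ∈ Npart k then
      sdAssign pref (orderList r (Npart h.choose).card (Npart h.choose))
        (Xpart h.choose) i
    else i

section AuxLemmas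
set_option linter.unusedSectionVars false
variable {α : Type*} [DecidableEq α] [Nonempty α]

lemma asymm_of_sto {r : α → α → Prop} (hr : IsStrictTotalOrder α r) {a b : α}
    (h1 : r a b) (h2 : r b a) : False :=
  hr.irrefl a (hr.trans _ _ _ h1 h2)

lemma exists_pick {r : α → α → Prop} (hr : IsStrictTotalOrder α r) (s : Finset α) :
    s.Nonempty → ∃ m, m ∈ s ∧ ∀ x ∈ s, x ≠ m → r m x := by
  induction s using Finset.induction_on with
  | empty => intro h; simp at h
  | @insert a s ha ih =>
    intro _
    rcases s.eq_empty_or_nonempty with rfl | hs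
    · exact ⟨a, by simp, by simp⟩
    · obtain ⟨m, hm, hmax⟩ := ih hs
      have htri : r a m ∨ a = m ∨ r m a := by
        by_cases h1 : r a m
        · exact Or.inl h1
        by_cases h2 : r m a
        · exact Or.inr (Or.inr h2)
        exact Or.inr (Or.inl (hr.trichotomous a m h1 h2))
      rcases htri with h | rfl | h
      · refine ⟨a, Finset.mem_insert_self _ _, ?_⟩
        intro x hx hxa
        rcases Finset.mem_insert.mp hx with rfl | hxs
        · exact absurd rfl hxa
        · by_cases hxm : x = m
          · subst hxm; exact h
          · exact hr.trans _ _ _ h (hmax x hxs hxm)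
      · refine ⟨a, Finset.mem_insert_self _ _, ?_⟩
        intro x hx hxm
        rcases Finset.mem_insert.mp hx with rfl | hxs
        · exact absurd rfl hxm
        · exact hmax x hxs hxm
      · refine ⟨m, Finset.mem_insert_of_mem hm, ?_⟩
        intro x hx hxm
        rcases Finset.mem_insert.mp hx with rfl | hxs
        · exact h
        · exact hmax x hxs hxm

lemma pick_spec {r : α → α → Prop} (hr : IsStrictTotalOrder α r) {s : Finset α}
    (hs : s.Nonempty) :
    pick r s ∈ s ∧ ∀ x ∈ s, x ≠ pick r s → r (pick r s) x :=
  Classical.epsilon_spec (exists_pick hr s hs)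

lemma pick_unique {r : α → α → Prop} (hr : IsStrictTotalOrder α r) {s : Finset α}
    {m : α} (hm : m ∈ s) (h : ∀ x ∈ s, x ≠ m → r m x) : pick r s = m := by
  obtain ⟨hp, hps⟩ := pick_spec hr ⟨m, hm⟩
  by_contra hne
  exact asymm_of_sto hr (hps m hm fun hc => hne hc.symm) (h _ hp hne)

lemma pick_subset {r : α → α → Prop} (hr : IsStrictTotalOrder α r) {A B : Finset α}
    (hBA : B ⊆ A) (hA : A.Nonempty) (hmem : pick r A ∈ B) : pick r B = pick r A :=
  pick_unique hr hmem fun x hx hxne => (pick_spec hr hA).2 x (hBA hx) hxne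

lemma pick_congr {r r' : α → α → Prop} (hr : IsStrictTotalOrder α r)
    (hr' : IsStrictTotalOrder α r') {B : Finset α} (hB : B.Nonempty)
    (hag : ∀ x ∈ B, ∀ y ∈ B, (r x y ↔ r' x y)) : pick r B = pick r' B := by
  obtain ⟨hp, hps⟩ := pick_spec hr' hB
  exact pick_unique hr hp fun x hx hxne =>
    (hag _ hp _ hx).mpr (hps x hx hxne)

lemma orderList_mem {r : α → α → Prop} (hr : IsStrictTotalOrder α r) :
    ∀ (n : ℕ) (s : Finset α), s.card ≤ n → ∀ a, (a ∈ orderList r n s ↔ a ∈ s) := by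
  intro n
  induction n with
  | zero =>
    intro s hs a
    simp only [orderList]
    rw [Nat.le_zero, Finset.card_eq_zero] at hs
    simp [hs]
  | succ n ih =>
    intro s hs a
    simp only [orderList]
    split_ifs with hne
    · obtain ⟨hp, _⟩ := pick_spec hr hne
      have hcard : (s.erase (pick r s)).card ≤ n := by
        rw [Finset.card_erase_of_mem hp]; omega
      rw [List.mem_cons, ih _ hcard a, Finset.mem_erase]
      constructor
      · rintro (rfl | ⟨_, h⟩) <;> [exact hp; exact h]
      · intro h
        by_cases hap : a = pick r s
        · exact Or.inl hap
        · exact Or.inr ⟨hap, h⟩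
    · rw [Finset.not_nonempty_iff_eq_empty] at hne
      simp [hne]

lemma orderList_length {r : α → α → Prop} (hr : IsStrictTotalOrder α r) :
    ∀ (n : ℕ) (s : Finset α), s.card ≤ n → (orderList r n s).length = s.card := by
  intro n
  induction n with
  | zero =>
    intro s hs
    simp only [orderList, List.length_nil]
    omega
  | succ n ih =>
    intro s hs
    simp only [orderList]
    split_ifs with hne
    · obtain ⟨hp, _⟩ := pick_spec hr hne
      have hc := Finset.card_erase_of_mem hp
      have hpos := Finset.card_pos.mpr hne
      rw [List.length_cons, ih _ (by omega)]
      omega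
    · rw [Finset.not_nonempty_iff_eq_empty] at hne
      simp [hne]

lemma orderList_pairwise {r : α → α → Prop} (hr : IsStrictTotalOrder α r) :
    ∀ (n : ℕ) (s : Finset α), s.card ≤ n → (orderList r n s).Pairwise r := by
  intro n
  induction n with
  | zero => intro s hs; simp [orderList]
  | succ n ih =>
    intro s hs
    simp only [orderList]
    split_ifs with hne
    · obtain ⟨hp, hps⟩ := pick_spec hr hne
      have hcard : (s.erase (pick r s)).card ≤ n := by
        rw [Finset.card_erase_of_mem hp]; omega
      refine List.Pairwise.cons ?_ (ih _ hcard)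
      intro b hb
      rw [orderList_mem hr _ _ hcard] at hb
      rw [Finset.mem_erase] at hb
      exact hps b hb.2 hb.1
    · simp

lemma pairwise_decomp {r : α → α → Prop} (hr : IsStrictTotalOrder α r)
    {L : List α} (hL : L.Pairwise r) {i : α} (hi : i ∈ L) :
    ∃ P t, L = P ++ i :: t ∧ i ∉ P ∧ (∀ a, a ∈ P ↔ (a ∈ L ∧ r a i)) := by
  obtain ⟨P, t, rfl⟩ := List.append_of_mem hi
  rw [List.pairwise_append] at hL
  obtain ⟨hP, hit, hcross⟩ := hL
  have hiP : i ∉ P := fun h => hr.irrefl i (hcross i h i (List.mem_cons_self))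
  refine ⟨P, t, rfl, hiP, fun a => ⟨fun ha => ?_, fun ⟨haL, hai⟩ => ?_⟩⟩
  · exact ⟨List.mem_append_left _ ha, hcross a ha i (List.mem_cons_self)⟩
  · rcases List.mem_append.mp haL with h | h
    · exact h
    · rcases List.mem_cons.mp h with rfl | h
      · exact absurd hai (hr.irrefl a)
      · exact absurd hai (fun hc => asymm_of_sto hr hc ((List.pairwise_cons.mp hit).1 a h))

lemma sublist_of_sorted {r r' : α → α → Prop} (hr : IsStrictTotalOrder α r)
    (hr' : IsStrictTotalOrder α r') :
    ∀ (P' P : List α), P.Pairwise r → P'.Pairwise r' → (∀ a ∈ P, a ∈ P') →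
      (∀ a ∈ P, ∀ b ∈ P, (r a b ↔ r' a b)) → P.Sublist P' := by
  intro P'
  induction P' with
  | nil =>
    intro P _ _ hsub _
    cases P with
    | nil => exact List.Sublist.refl _
    | cons a t => exact absurd (hsub a (List.mem_cons_self)) (by simp)
  | cons b t' ih =>
    intro P hP hP' hsub hag
    cases P with
    | nil => exact List.nil_sublist _
    | cons a t =>
      by_cases hab : a = b
      · subst hab
        refine List.Sublist.cons₂ a (ih t (List.pairwise_cons.mp hP).2
          (List.pairwise_cons.mp hP').2 ?_ ?_)
        · intro x hx
          rcases List.mem_cons.mp (hsub x (List.mem_cons_of_mem _ hx)) with rfl | h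
          · exact absurd ((List.pairwise_cons.mp hP).1 x hx) (hr.irrefl x)
          · exact h
        · intro x hx y hy
          exact hag x (List.mem_cons_of_mem _ hx) y (List.mem_cons_of_mem _ hy)
      · have hbP : b ∉ a :: t := by
          intro hb
          rcases List.mem_cons.mp hb with rfl | hbt
          · exact hab rfl
          · have hrab : r a b := (List.pairwise_cons.mp hP).1 b hbt
            have hat' : a ∈ t' := by
              rcases List.mem_cons.mp (hsub a (List.mem_cons_self)) with rfl | h
              · exact absurd rfl hab
              · exact h
            have hr'ba : r' b a := (List.pairwise_cons.mp hP').1 a hat'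
            exact asymm_of_sto hr'
              ((hag a (List.mem_cons_self) b hb).mp hrab) hr'ba
        refine List.Sublist.cons b (ih (a :: t) hP (List.pairwise_cons.mp hP').2 ?_ hag)
        intro x hx
        rcases List.mem_cons.mp (hsub x hx) with rfl | h
        · exact absurd hx hbP
        · exact h

lemma sd_main (pref pref' : α → α → α → Prop)
    (hp : StrictProfile pref) (hp' : StrictProfile pref') (i : α) (X : Finset α) :
    ∀ (P' P t t' : List α) (A B : Finset α),
      i ∉ P → i ∉ P' → P.Sublist P' →
      B ⊆ A → A ⊆ X →
      (P ++ i :: t).length ≤ A.card → (P' ++ i :: t').length ≤ B.card →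
      (∀ j ∈ P, ∀ x ∈ X, ∀ y ∈ X, (pref j x y ↔ pref' j x y)) →
      sdAssign pref (P ++ i :: t) A i = sdAssign pref' (P' ++ i :: t') B i ∨
      pref i (sdAssign pref (P ++ i :: t) A i) (sdAssign pref' (P' ++ i :: t') B i) := by
  intro P'
  induction P' with
  | nil =>
    intro P t t' A B hiP hiP' hsub hBA hAX hlA hlB hag
    have hPnil : P = [] := List.sublist_nil.mp hsub
    subst hPnil
    simp only [List.nil_append] at hlA hlB ⊢
    have hBne : B.Nonempty := Finset.card_pos.mp (by simp at hlB; omega)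
    have hAne : A.Nonempty := hBne.mono hBA
    simp only [sdAssign, Function.update_self]
    have hq : pick (pref' i) B ∈ A := hBA (pick_spec (hp' i) hBne).1
    by_cases heq : pick (pref' i) B = pick (pref i) A
    · exact Or.inl heq.symm
    · exact Or.inr ((pick_spec (hp i) hAne).2 _ hq heq)
  | cons b t'' ih =>
    intro P t t' A B hiP hiP' hsub hBA hAX hlA hlB hag
    have hbi : b ≠ i := fun h => hiP' (h ▸ List.mem_cons_self)
    have hBne : B.Nonempty := Finset.card_pos.mp (by simp at hlB; omega)
    have hAne : A.Nonempty := hBne.mono hBA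
    cases hsub with
    | cons _ hsub' =>
      set pb := pick (pref' b) B with hpb
      have hpbB : pb ∈ B := (pick_spec (hp' b) hBne).1
      have hstep : sdAssign pref' ((b :: t'') ++ i :: t') B i
          = sdAssign pref' (t'' ++ i :: t') (B.erase pb) i := by
        simp only [List.cons_append, sdAssign]
        rw [Function.update_of_ne (Ne.symm hbi)]
      rw [hstep]
      refine ih P t t' A (B.erase pb) hiP
        (fun h => hiP' (List.mem_cons_of_mem _ h)) hsub'
        (fun x hx => hBA (Finset.mem_of_mem_erase hx)) hAX hlA ?_ hag
      rw [Finset.card_erase_of_mem hpbB]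
      simp only [List.cons_append, List.length_cons] at hlB
      simp only [List.length_append, List.length_cons] at hlB ⊢
      omega
    | cons_cons _ hsub' =>
      rename_i P₁
      have hiP₁ : i ∉ P₁ := fun h => hiP (List.mem_cons_of_mem _ h)
      have hagb : ∀ x ∈ X, ∀ y ∈ X, (pref b x y ↔ pref' b x y) :=
        hag b (List.mem_cons_self)
      set pa := pick (pref b) A with hpa
      set pb := pick (pref' b) B with hpb
      have hpaA : pa ∈ A := (pick_spec (hp b) hAne).1
      have hpbB : pb ∈ B := (pick_spec (hp' b) hBne).1
      have hpbeq : pb = pick (pref b) B := by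
        rw [hpb]
        exact (pick_congr (hp b) (hp' b) hBne
          (fun x hx y hy => hagb x (hBA hx |> hAX) y (hBA hy |> hAX))).symm
      have hstepA : sdAssign pref ((b :: P₁) ++ i :: t) A i
          = sdAssign pref (P₁ ++ i :: t) (A.erase pa) i := by
        simp only [List.cons_append, sdAssign]
        rw [Function.update_of_ne (Ne.symm hbi)]
      have hstepB : sdAssign pref' ((b :: t'') ++ i :: t') B i
          = sdAssign pref' (t'' ++ i :: t') (B.erase pb) i := by
        simp only [List.cons_append, sdAssign]
        rw [Function.update_of_ne (Ne.symm hbi)]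
      rw [hstepA, hstepB]
      have hsubAB : B.erase pb ⊆ A.erase pa := by
        intro x hx
        obtain ⟨hxpb, hxB⟩ := Finset.mem_erase.mp hx
        refine Finset.mem_erase.mpr ⟨?_, hBA hxB⟩
        intro hxpa
        apply hxpb
        have : pa ∈ B := hxpa ▸ hxB
        rw [hpbeq, pick_subset (hp b) hBA hAne this]
        exact hxpa
      refine ih P₁ t t' (A.erase pa) (B.erase pb) hiP₁
        (fun h => hiP' (List.mem_cons_of_mem _ h)) hsub' hsubAB
        (fun x hx => hAX (Finset.mem_of_mem_erase hx)) ?_ ?_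
        (fun j hj => hag j (List.mem_cons_of_mem _ hj))
      · rw [Finset.card_erase_of_mem hpaA]
        simp only [List.cons_append, List.length_cons, List.length_append] at hlA ⊢
        omega
      · rw [Finset.card_erase_of_mem hpbB]
        simp only [List.cons_append, List.length_cons, List.length_append] at hlB ⊢
        omega

end AuxLemmas

/-- Predecessor preservation in the Endogenous-Order Serial Dictatorship form.  Fix
a division `i` in group `k` and two profiles `pref`, `pref'`.  If (i) every
predecessor of `i` within its group under `ρ pref` is still a predecessor under
`ρ pref'`, (ii) the two endogenous orders agree on those predecessors, and (iii)
every such predecessor's preferences agree on the choice set `X_k`, then `i` weakly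
prefers its assignment at `pref` to its assignment at `pref'`. -/
theorem eosd_predecessor_preservation {α : Type*} [Fintype α] [DecidableEq α]
    [Nonempty α] {K : ℕ} (Npart Xpart : Fin K → Finset α)
    (hpart : IsAPartition Npart Xpart)
    (ρ : (α → α → α → Prop) → (α → α → Prop))
    (hρ : ∀ p, IsStrictTotalOrder α (ρ p))
    (pref pref' : α → α → α → Prop)
    (hpref : StrictProfile pref) (hpref' : StrictProfile pref')
    (i : α) (k : Fin K) (hik : i ∈ Npart k)
    (h1 : ∀ j ∈ Npart k, ρ pref j i → ρ pref' j i)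
    (h2 : ∀ j ∈ Npart k, ∀ j' ∈ Npart k, ρ pref j i → ρ pref j' i →
      (ρ pref j j' ↔ ρ pref' j j'))
    (h3 : ∀ j ∈ Npart k, ρ pref j i →
      ∀ x ∈ Xpart k, ∀ y ∈ Xpart k, (pref j x y ↔ pref' j x y)) :
    groupSD Npart Xpart (ρ pref) pref i = groupSD Npart Xpart (ρ pref') pref' i ∨
    pref i (groupSD Npart Xpart (ρ pref) pref i)
      (groupSD Npart Xpart (ρ pref') pref' i) := by
  have hr := hρ pref
  have hr' := hρ pref'
  have hex : ∃ k', i ∈ Npart k' := ⟨k, hik⟩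
  simp only [groupSD, dif_pos hex]
  have hkeq : hex.choose = k := (hpart.1 i).unique hex.choose_spec hik
  rw [hkeq]
  have hcard : (Npart k).card = (Xpart k).card := hpart.2.2.2 k
  have hmemL : ∀ a, a ∈ orderList (ρ pref) (Npart k).card (Npart k) ↔ a ∈ Npart k :=
    orderList_mem hr _ _ le_rfl
  have hmemL' : ∀ a, a ∈ orderList (ρ pref') (Npart k).card (Npart k) ↔ a ∈ Npart k :=
    orderList_mem hr' _ _ le_rfl
  have hpwL := orderList_pairwise hr (Npart k).card (Npart k) le_rfl
  have hpwL' := orderList_pairwise hr' (Npart k).card (Npart k) le_rfl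
  have hlenL := orderList_length hr (Npart k).card (Npart k) le_rfl
  have hlenL' := orderList_length hr' (Npart k).card (Npart k) le_rfl
  obtain ⟨P, t, hLeq, hiP, hPchar⟩ := pairwise_decomp hr hpwL ((hmemL i).mpr hik)
  obtain ⟨P', t', hL'eq, hiP', hP'char⟩ := pairwise_decomp hr' hpwL' ((hmemL' i).mpr hik)
  have hPmem : ∀ a ∈ P, a ∈ Npart k ∧ ρ pref a i := by
    intro a ha
    obtain ⟨haL, hai⟩ := (hPchar a).mp ha
    exact ⟨(hmemL a).mp haL, hai⟩
  have hpwP : P.Pairwise (ρ pref) := by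
    have h := hLeq ▸ hpwL
    exact (List.pairwise_append.mp h).1
  have hpwP' : P'.Pairwise (ρ pref') := by
    have h := hL'eq ▸ hpwL'
    exact (List.pairwise_append.mp h).1
  have hsub : P.Sublist P' := by
    refine sublist_of_sorted hr hr' P' P hpwP hpwP' ?_ ?_
    · intro a ha
      obtain ⟨haN, hai⟩ := hPmem a ha
      exact (hP'char a).mpr ⟨(hmemL' a).mpr haN, h1 a haN hai⟩
    · intro a ha b hb
      obtain ⟨haN, hai⟩ := hPmem a ha
      obtain ⟨hbN, hbi⟩ := hPmem b hb
      exact h2 a haN b hbN hai hbi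
  rw [hLeq, hL'eq]
  refine sd_main pref pref' hpref hpref' i (Xpart k) P' P t t' (Xpart k) (Xpart k)
    hiP hiP' hsub (Finset.Subset.refl _) (Finset.Subset.refl _) ?_ ?_ ?_
  · rw [← hLeq, hlenL, hcard]
  · rw [← hL'eq, hlenL', hcard]
  · intro j hj
    obtain ⟨hjN, hji⟩ := hPmem j hj
    exact h3 j hjN hji
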